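/- Let θ : ℝⁿ → ℝⁿ and ζ : ℝⁿ → ℝᵐ be twice continuously differentiable with θ(0) = 0 and ζ(0) = 0, let ε > 0, and let B_ε(0) be the closed Euclidean ball of radius ε about the origin in ℝⁿ. Let β_ε ≥ max over p,q,r ∈ {1,…,n} and ξ ∈ B_ε(0) of |∂²θ⁽ᵖ⁾/∂x⁽q⁾∂x⁽r⁾(ξ)|, and let μ_ε ≥ max over p ∈ {1,…,m}, q,r ∈ {1,…,n}, and ξ ∈ B_ε(0) of |∂²ζ⁽ᵖ⁾/∂x⁽q⁾∂x⁽r⁾(ξ)|. Let J_θ(0) and J_ζ(0) denote the Jacobian matrices of θ and ζ at 0. If the symmetric (n+m)×(n+m) block matrix M_ε = [[(1/2)(J_θ(0)ᵀ + J_θ(0) + (ε n^{3/2} β_ε + ε² n² m μ_ε²) I_n), J_ζ(0)ᵀ], [J_ζ(0), −(1/2) I_m]] is negative semidefinite, then ζ(x)ᵀζ(x) + (1/2)(xᵀθ(x) + θ(x)ᵀx) ≤ 0 for all x ∈ B_ε(0). -/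

import Mathlib

open Matrix

/-- Euclidean norm on `ℝⁿ` (represented as `Fin n → ℝ`). -/
noncomputable def enorm2 {n : ℕ} (x : Fin n → ℝ) : ℝ := Real.sqrt (∑ i, x i ^ 2)

/-- Second partial derivative `∂²f/∂x⁽q⁾∂x⁽r⁾` of `f : ℝⁿ → ℝ` at `ξ`. -/
noncomputable def pd2 {n : ℕ} (f : (Fin n → ℝ) → ℝ) (q r : Fin n) (ξ : Fin n → ℝ) : ℝ :=
  fderiv ℝ (fun y => fderiv ℝ f y (Pi.single q 1)) ξ (Pi.single r 1)

/-- A real matrix is negative semidefinite iff its negation is positive semidefinite. -/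
def Matrix.NegSemidef {ι : Type*} [Fintype ι] (M : Matrix ι ι ℝ) : Prop :=
  (-M).PosSemidef

open Set

/-!
Testing the negative semidefinite block matrix at `(x, 2 J_ζ(0) x)` gives
`xᵀ J_θ(0) x + (c / 2) |x|² + 2 |J_ζ(0) x|² ≤ 0`, where `c` is the correction in the top-left block.
Taylor's theorem along the segment `[0, x]` bounds each component of the remainders
`θ(x) - J_θ(0) x` and `ζ(x) - J_ζ(0) x` by `β ‖x‖₁² / 2` and `μ ‖x‖₁² / 2`. Since `‖x‖₁ ≤ √n |x|` and
`|x| ≤ ε`, the remainder terms `xᵀ (θ(x) - J_θ(0) x)` and `2 |ζ(x) - J_ζ(0) x|²` (the latter from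
`|a + b|² ≤ 2 |a|² + 2 |b|²`) are bounded by the two summands of `(c / 2) |x|²`.
-/

theorem norm_sub_sub_deriv_le_of_norm_deriv2_le {E : Type*} [NormedAddCommGroup E]
    [NormedSpace ℝ E] {g g' g'' : ℝ → E} {K : ℝ}
    (hg : ∀ t ∈ Icc (0 : ℝ) 1, HasDerivAt g (g' t) t)
    (hg' : ∀ t ∈ Icc (0 : ℝ) 1, HasDerivAt g' (g'' t) t)
    (hK : ∀ t ∈ Icc (0 : ℝ) 1, ‖g'' t‖ ≤ K) :
    ‖g 1 - g 0 - g' 0‖ ≤ K / 2 := by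
  have hg'_sub : ∀ t ∈ Icc (0 : ℝ) 1, ‖g' t - g' 0‖ ≤ K * t := fun t ht => by
    simpa using norm_image_sub_le_of_norm_deriv_le_segment'
      (fun s hs => (hg' s hs).hasDerivWithinAt) (fun s hs => hK s (Ico_subset_Icc_self hs)) t ht
  have hB (t : ℝ) : HasDerivAt (fun s => K / 2 * s ^ 2) (K * t) t :=
    ((hasDerivAt_pow 2 t).const_mul (K / 2)).congr_deriv (by push_cast; ring)
  have := image_norm_le_of_norm_deriv_right_le_deriv_boundary
    (f := fun t => g t - g 0 - t • g' 0) (f' := fun t => g' t - g' 0)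
    (fun t ht => ((hg t ht).continuousAt.sub continuousAt_const).sub
      (continuousAt_id.smul continuousAt_const) |>.continuousWithinAt)
    (fun t ht => by
      have := ((hg t (Ico_subset_Icc_self ht)).sub_const (g 0)).sub
        ((hasDerivAt_id t).smul_const (g' 0))
      rw [one_smul] at this
      exact this.hasDerivWithinAt)
    (by simp) hB (fun t ht => hg'_sub t (Ico_subset_Icc_self ht)) (right_mem_Icc.2 zero_le_one)
  simpa using this

section Coordinates

variable {ι : Type*} [Fintype ι] [DecidableEq ι]

theorem ContinuousLinearMap.apply_eq_sum_single {F : Type*} [AddCommGroup F] [Module ℝ F]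
    [TopologicalSpace F] (L : (ι → ℝ) →L[ℝ] F) (x : ι → ℝ) :
    L x = ∑ i, x i • L (Pi.single i 1) := by
  conv_lhs => rw [pi_eq_sum_univ' x]
  simp [map_sum, map_smul]

theorem ContinuousLinearMap.abs_apply_le_of_abs_apply_single_le (L : (ι → ℝ) →L[ℝ] ℝ) {β : ℝ}
    (hL : ∀ i, |L (Pi.single i 1)| ≤ β) (x : ι → ℝ) : |L x| ≤ β * ∑ i, |x i| := by
  rw [L.apply_eq_sum_single, Finset.mul_sum]
  refine (Finset.abs_sum_le_sum_abs _ _).trans (Finset.sum_le_sum fun i _ => ?_)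
  rw [smul_eq_mul, abs_mul, mul_comm β]
  exact mul_le_mul_of_nonneg_left (hL i) (abs_nonneg _)

theorem ContinuousLinearMap.abs_apply_apply_le_of_abs_apply_single_le
    (B : (ι → ℝ) →L[ℝ] (ι → ℝ) →L[ℝ] ℝ) {β : ℝ}
    (hB : ∀ i j, |B (Pi.single i 1) (Pi.single j 1)| ≤ β) (x : ι → ℝ) :
    |B x x| ≤ β * (∑ i, |x i|) ^ 2 := by
  have hBx : ∀ j, |B x (Pi.single j 1)| ≤ β * ∑ i, |x i| := fun j =>
    (B.flip (Pi.single j 1)).abs_apply_le_of_abs_apply_single_le (fun i => hB i j) x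
  simpa [sq, mul_assoc] using (B x).abs_apply_le_of_abs_apply_single_le hBx x

end Coordinates

theorem pd2_eq_fderiv_fderiv_apply {n : ℕ} {f : (Fin n → ℝ) → ℝ} {ξ : Fin n → ℝ}
    (hf : DifferentiableAt ℝ (fderiv ℝ f) ξ) (q r : Fin n) :
    pd2 f q r ξ = fderiv ℝ (fderiv ℝ f) ξ (Pi.single r 1) (Pi.single q 1) := by
  simp [pd2, fderiv_clm_apply hf (differentiableAt_const _)]

theorem abs_sub_sub_fderiv_le_of_abs_pd2_le {n : ℕ} {f : (Fin n → ℝ) → ℝ} (hf : ContDiff ℝ 2 f)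
    {x : Fin n → ℝ} {β : ℝ} (hβ : ∀ q r, ∀ t ∈ Icc (0 : ℝ) 1, |pd2 f q r (t • x)| ≤ β) :
    |f x - f 0 - fderiv ℝ f 0 x| ≤ β / 2 * (∑ i, |x i|) ^ 2 := by
  have hf' : Differentiable ℝ (fderiv ℝ f) :=
    (hf.fderiv_right (m := 1) le_rfl).differentiable one_ne_zero
  have hline (t : ℝ) : HasDerivAt (fun s : ℝ => s • x) x t := by
    simpa using (hasDerivAt_id t).smul_const x
  have hg (t : ℝ) : HasDerivAt (fun s : ℝ => f (s • x)) (fderiv ℝ f (t • x) x) t :=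
    (hf.differentiable two_ne_zero _).hasFDerivAt.comp_hasDerivAt t (hline t)
  have hg' (t : ℝ) : HasDerivAt (fun s : ℝ => fderiv ℝ f (s • x) x)
      (fderiv ℝ (fderiv ℝ f) (t • x) x x) t := by
    simpa using ((hf' _).hasFDerivAt.comp_hasDerivAt t (hline t)).clm_apply (hasDerivAt_const t x)
  have hg'' : ∀ t ∈ Icc (0 : ℝ) 1, ‖fderiv ℝ (fderiv ℝ f) (t • x) x x‖ ≤ β * (∑ i, |x i|) ^ 2 :=
    fun t ht => (fderiv ℝ (fderiv ℝ f) (t • x)).abs_apply_apply_le_of_abs_apply_single_le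
      (fun r q => pd2_eq_fderiv_fderiv_apply (hf' _) q r ▸ hβ q r t ht) x
  have := norm_sub_sub_deriv_le_of_norm_deriv2_le (fun t _ => hg t) (fun t _ => hg' t) hg''
  simpa [mul_div_right_comm] using this

section EuclideanNorm

variable {n : ℕ}

theorem enorm2_nonneg (x : Fin n → ℝ) : 0 ≤ enorm2 x := Real.sqrt_nonneg _

theorem enorm2_sq (x : Fin n → ℝ) : enorm2 x ^ 2 = x ⬝ᵥ x := by
  rw [enorm2, Real.sq_sqrt (Finset.sum_nonneg fun i _ => sq_nonneg (x i))]
  simp [dotProduct, sq]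

theorem enorm2_smul (t : ℝ) (x : Fin n → ℝ) : enorm2 (t • x) = |t| * enorm2 x := by
  simp only [enorm2, Pi.smul_apply, smul_eq_mul, mul_pow, ← Finset.mul_sum]
  rw [Real.sqrt_mul (sq_nonneg t), Real.sqrt_sq_eq_abs]

theorem sum_abs_le_sqrt_mul_enorm2 (x : Fin n → ℝ) : ∑ i, |x i| ≤ √n * enorm2 x := by
  rw [enorm2, ← Real.sqrt_mul n.cast_nonneg]
  refine Real.le_sqrt_of_sq_le ?_
  simpa using sq_sum_le_card_mul_sum_sq (s := Finset.univ) (f := fun i => |x i|)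

theorem sum_abs_pow_le_of_enorm2_le {x : Fin n → ℝ} {ε : ℝ} (hx : enorm2 x ≤ ε) (k : ℕ) :
    (∑ i, |x i|) ^ (k + 2) ≤ √n ^ (k + 2) * ε ^ k * enorm2 x ^ 2 := by
  have hN := enorm2_nonneg x
  calc (∑ i, |x i|) ^ (k + 2) ≤ (√n * enorm2 x) ^ (k + 2) :=
        pow_le_pow_left₀ (Finset.sum_nonneg fun i _ => abs_nonneg _)
          (sum_abs_le_sqrt_mul_enorm2 x) _
    _ = √n ^ (k + 2) * enorm2 x ^ k * enorm2 x ^ 2 := by ring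
    _ ≤ √n ^ (k + 2) * ε ^ k * enorm2 x ^ 2 := by gcongr

end EuclideanNorm

theorem abs_apply_sub_mulVec_le_of_abs_pd2_le {n k : ℕ} {F : (Fin n → ℝ) → (Fin k → ℝ)}
    (hF : ContDiff ℝ 2 F) (hF0 : F 0 = 0) {J : Matrix (Fin k) (Fin n) ℝ}
    (hJ : ∀ p q, J p q = fderiv ℝ (fun z => F z p) 0 (Pi.single q 1)) {ε β : ℝ}
    (hβ : ∀ p q r, ∀ ξ, enorm2 ξ ≤ ε → |pd2 (fun z => F z p) q r ξ| ≤ β)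
    {x : Fin n → ℝ} (hx : enorm2 x ≤ ε) (p : Fin k) :
    |F x p - (J *ᵥ x) p| ≤ β / 2 * (∑ i, |x i|) ^ 2 := by
  have hJx : (J *ᵥ x) p = fderiv ℝ (fun z => F z p) 0 x := by
    simp [ContinuousLinearMap.apply_eq_sum_single _ x, mulVec, dotProduct, hJ, mul_comm]
  have hseg : ∀ t ∈ Icc (0 : ℝ) 1, enorm2 (t • x) ≤ ε := fun t ht => by
    rw [enorm2_smul, abs_of_nonneg ht.1]
    exact (mul_le_of_le_one_left (enorm2_nonneg x) ht.2).trans hx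
  have := abs_sub_sub_fderiv_le_of_abs_pd2_le (contDiff_pi.mp hF p)
    fun q r t ht => hβ p q r _ (hseg t ht)
  simpa [hF0, hJx] using this

section DotProduct

variable {ι : Type*} [Fintype ι]

theorem dotProduct_le_of_abs_le (u : ι → ℝ) {r : ι → ℝ} {b : ℝ}
    (hr : ∀ i, |r i| ≤ b) : u ⬝ᵥ r ≤ (∑ i, |u i|) * b := by
  rw [Finset.sum_mul]
  refine (le_abs_self _).trans <| (Finset.abs_sum_le_sum_abs _ _).trans <|
    Finset.sum_le_sum fun i _ => ?_
  rw [abs_mul]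
  exact mul_le_mul_of_nonneg_left (hr i) (abs_nonneg _)

theorem dotProduct_self_le_of_abs_le {r : ι → ℝ} {b : ℝ}
    (hr : ∀ i, |r i| ≤ b) : r ⬝ᵥ r ≤ Fintype.card ι * b ^ 2 := by
  calc r ⬝ᵥ r = ∑ i, |r i| ^ 2 := by simp [dotProduct, sq]
    _ ≤ ∑ _i : ι, b ^ 2 := Finset.sum_le_sum fun i _ => pow_le_pow_left₀ (abs_nonneg _) (hr i) 2
    _ = Fintype.card ι * b ^ 2 := by simp

theorem dotProduct_self_add_le (a s : ι → ℝ) :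
    (a + s) ⬝ᵥ (a + s) ≤ 2 * (a ⬝ᵥ a) + 2 * (s ⬝ᵥ s) := by
  have h : 0 ≤ (a - s) ⬝ᵥ (a - s) := Finset.sum_nonneg fun i _ => mul_self_nonneg _
  simp only [add_dotProduct, dotProduct_add, sub_dotProduct, dotProduct_sub,
    dotProduct_comm s a] at h ⊢
  linarith

end DotProduct

theorem Matrix.NegSemidef.dotProduct_mulVec_add_le_zero {ι κ : Type*} [Fintype ι] [Fintype κ]
    [DecidableEq ι] [DecidableEq κ] {P : Matrix ι ι ℝ} {B : Matrix κ ι ℝ} {c : ℝ}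
    (h : (fromBlocks ((1 / 2 : ℝ) • (Pᵀ + P + c • 1)) Bᵀ B ((-(1 / 2) : ℝ) • 1)).NegSemidef)
    (u : ι → ℝ) : u ⬝ᵥ P *ᵥ u + c / 2 * (u ⬝ᵥ u) + 2 * (B *ᵥ u ⬝ᵥ B *ᵥ u) ≤ 0 := by
  have := h.dotProduct_mulVec_nonneg (Sum.elim u ((2 : ℝ) • B *ᵥ u))
  simp only [star_trivial, neg_mulVec, dotProduct_neg, fromBlocks_mulVec,
    sumElim_dotProduct_sumElim, Sum.elim_comp_inl, Sum.elim_comp_inr, add_mulVec, smul_mulVec,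
    one_mulVec, dotProduct_add, dotProduct_smul, smul_dotProduct, mulVec_smul, smul_eq_mul,
    dotProduct_transpose_mulVec] at this
  linarith

/-- (Theorem 2 of the paper: LMI constraint on a ball about the origin.)
Let `θ : ℝⁿ → ℝⁿ` and `ζ : ℝⁿ → ℝᵐ` be `C²` with `θ(0) = 0`, `ζ(0) = 0`, let `ε > 0`,
let `β_ε, μ_ε` bound the second partials of the components of `θ, ζ` on the closed ball
`B_ε(0)`, and let `J_θ(0), J_ζ(0)` be the Jacobians at the origin. If the block matrix
`M_ε = [[½(J_θ(0)ᵀ + J_θ(0) + (ε n^{3/2} β_ε + ε² n² m μ_ε²) I_n), J_ζ(0)ᵀ],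
[J_ζ(0), −½ I_m]]` is negative semidefinite, then
`ζ(x)ᵀζ(x) + ½(xᵀθ(x) + θ(x)ᵀx) ≤ 0` for all `x ∈ B_ε(0)`. -/
theorem lmi_constraint_on_ball_about_origin
    {n m : ℕ}
    (θ : (Fin n → ℝ) → (Fin n → ℝ)) (ζ : (Fin n → ℝ) → (Fin m → ℝ))
    (hθ : ContDiff ℝ 2 θ) (hζ : ContDiff ℝ 2 ζ)
    (hθ0 : θ 0 = 0) (hζ0 : ζ 0 = 0)
    (ε : ℝ) (hε : 0 < ε)
    (βε : ℝ)
    (hβε : ∀ (p q r : Fin n), ∀ ξ : Fin n → ℝ, enorm2 ξ ≤ ε →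
      |pd2 (fun z => θ z p) q r ξ| ≤ βε)
    (με : ℝ)
    (hμε : ∀ (p : Fin m) (q r : Fin n), ∀ ξ : Fin n → ℝ, enorm2 ξ ≤ ε →
      |pd2 (fun z => ζ z p) q r ξ| ≤ με)
    (Jθ : Matrix (Fin n) (Fin n) ℝ)
    (hJθ : ∀ p q, Jθ p q = fderiv ℝ (fun z => θ z p) 0 (Pi.single q 1))
    (Jζ : Matrix (Fin m) (Fin n) ℝ)
    (hJζ : ∀ p q, Jζ p q = fderiv ℝ (fun z => ζ z p) 0 (Pi.single q 1))
    (hM : (Matrix.fromBlocks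
        ((1 / 2 : ℝ) • (Jθᵀ + Jθ +
          (ε * (n : ℝ) ^ ((3 : ℝ) / 2) * βε + ε ^ 2 * (n : ℝ) ^ 2 * (m : ℝ) * με ^ 2) • 1))
        Jζᵀ Jζ ((-(1 / 2) : ℝ) • 1)).NegSemidef) :
    ∀ x : Fin n → ℝ, enorm2 x ≤ ε →
      ζ x ⬝ᵥ ζ x + (1 / 2) * (x ⬝ᵥ θ x + θ x ⬝ᵥ x) ≤ 0 := by
  intro x hx
  obtain _ | _ := isEmpty_or_nonempty (Fin n)
  · simp [Subsingleton.elim x 0, hθ0, hζ0]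
  have hβ : 0 ≤ βε := (abs_nonneg _).trans <| hβε (Classical.arbitrary _)
    (Classical.arbitrary _) (Classical.arbitrary _) 0 (by simp [enorm2, hε.le])
  have hLMI := hM.dotProduct_mulVec_add_le_zero x
  have hθR := dotProduct_le_of_abs_le x (r := θ x - Jθ *ᵥ x)
    (abs_apply_sub_mulVec_le_of_abs_pd2_le hθ hθ0 hJθ hβε hx)
  have hζR := dotProduct_self_le_of_abs_le (r := ζ x - Jζ *ᵥ x)
    (abs_apply_sub_mulVec_le_of_abs_pd2_le hζ hζ0 hJζ hμε hx)
  have hζsplit := dotProduct_self_add_le (Jζ *ᵥ x) (ζ x - Jζ *ᵥ x)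
  rw [add_sub_cancel] at hζsplit
  have hL3 := mul_le_mul_of_nonneg_left (sum_abs_pow_le_of_enorm2_le hx 1) hβ
  have hL4 := mul_le_mul_of_nonneg_left (sum_abs_pow_le_of_enorm2_le hx 2)
    (by positivity : (0 : ℝ) ≤ m * με ^ 2)
  have hn3 : (n : ℝ) ^ ((3 : ℝ) / 2) = √n ^ 3 := by
    rw [Real.rpow_div_two_eq_sqrt _ n.cast_nonneg]; norm_cast
  have hn4 : √n ^ 4 = (n : ℝ) ^ 2 := by simp [pow_mul' _ 2 2]
  rw [dotProduct_sub] at hθR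
  rw [hn3, ← enorm2_sq] at hLMI
  rw [Fintype.card_fin] at hζR
  norm_num only [hn4] at hL3 hL4
  rw [dotProduct_comm (θ x)]
  linarith
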